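/- Let d ≥ 1 and let ψ : Fin d × Fin d → ℂ be the maximally entangled (generalized Bell) unit vector ψ(j,k) = (1/√d) if j = k and 0 otherwise, with density matrix ρ = ψ·ψᴴ, i.e. ρ((j,k),(j',k')) = ψ(j,k)·conj(ψ(j',k')). Then ‖ρ^{T_B}‖₁ = d while ‖ρ‖₁ = 1; hence the bound ‖ρ^{T_B}‖₁ ≤ min(d_A, d_B)·‖ρ‖₁ is tight. -/

import Mathlib

/-!
`ρ = ψψᴴ` is positive semidefinite, so `|ρ| = ρ` and `‖ρ‖₁ = tr ρ = ‖ψ‖² = 1`. Its partial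
transpose is `1/d` times the swap operator, a permutation matrix and hence unitary, so
`|ρ^{T_B}| = (1/d) • 1` and `‖ρ^{T_B}‖₁ = d² / d = d`. Both absolute values are identified by
uniqueness of the positive semidefinite square root.
-/

open Matrix
open scoped ComplexOrder

/-- The matrix absolute value `|X|`: the unique positive semidefinite square root of `Xᴴ * X`. -/
noncomputable def matAbs {n : Type*} [Fintype n] [DecidableEq n] (X : Matrix n n ℂ) :
    Matrix n n ℂ :=
  (Matrix.posSemidef_conjTranspose_mul_self X).isHermitian.eigenvectorUnitary.1 *
    diagonal ((↑) ∘ (fun x : ℝ => Real.sqrt x) ∘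
      (Matrix.posSemidef_conjTranspose_mul_self X).isHermitian.eigenvalues) *
    (star (Matrix.posSemidef_conjTranspose_mul_self X).isHermitian.eigenvectorUnitary :
      Matrix n n ℂ)

/-- The trace norm `‖X‖₁ = trace |X|` (a real number). -/
noncomputable def traceNorm {n : Type*} [Fintype n] [DecidableEq n] (X : Matrix n n ℂ) : ℝ :=
  ((matAbs X).trace).re

/-- Partial transpose over the second tensor factor:
`ρ^{T_B} ((a,b),(a',b')) = ρ ((a,b'),(a',b))`. -/
def ptransB {ιA ιB : Type*} (ρ : Matrix (ιA × ιB) (ιA × ιB) ℂ) :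
    Matrix (ιA × ιB) (ιA × ιB) ℂ :=
  Matrix.of fun p q => ρ (p.1, q.2) (q.1, p.2)

section TraceNorm

variable {n : Type*} [Fintype n] [DecidableEq n]

open scoped MatrixOrder in
lemma matAbs_eq_of_sq_eq {X M : Matrix n n ℂ} (hM : M.PosSemidef) (h : M ^ 2 = Xᴴ * X) :
    matAbs X = M := by
  have hX := posSemidef_conjTranspose_mul_self X
  have h_cfc : matAbs X = cfc Real.sqrt (Xᴴ * X) := by
    rw [hX.isHermitian.cfc_eq, IsHermitian.cfc, Unitary.conjStarAlgAut_apply]; rfl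
  rw [h_cfc, ← cfcₙ_eq_cfc (hf0 := Real.sqrt_zero), ← CFC.sqrt_eq_real_sqrt _ hX.nonneg]
  exact CFC.sqrt_unique (by rw [← sq, h]) hM.nonneg

lemma matAbs_of_posSemidef {A : Matrix n n ℂ} (hA : A.PosSemidef) : matAbs A = A :=
  matAbs_eq_of_sq_eq hA (by rw [hA.isHermitian.eq, sq])

lemma traceNorm_of_posSemidef {A : Matrix n n ℂ} (hA : A.PosSemidef) :
    traceNorm A = A.trace.re := by
  rw [traceNorm, matAbs_of_posSemidef hA]

lemma traceNorm_vecMulVec_self_star (ψ : n → ℂ) :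
    traceNorm (vecMulVec ψ (star ψ)) = (ψ ⬝ᵥ star ψ).re := by
  rw [traceNorm_of_posSemidef (posSemidef_vecMulVec_self_star ψ), trace_vecMulVec]

lemma matAbs_smul_of_mem_unitaryGroup (c : ℂ) {U : Matrix n n ℂ}
    (hU : U ∈ unitaryGroup n ℂ) : matAbs (c • U) = diagonal fun _ => (‖c‖ : ℂ) := by
  refine matAbs_eq_of_sq_eq (PosSemidef.diagonal fun _ => by simp) ?_
  rw [conjTranspose_smul, smul_mul_smul_comm, ← star_eq_conjTranspose,
    mem_unitaryGroup_iff'.mp hU, diagonal_pow, RCLike.star_def, Complex.conj_mul',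
    smul_one_eq_diagonal]
  rfl

lemma traceNorm_smul_of_mem_unitaryGroup (c : ℂ) {U : Matrix n n ℂ}
    (hU : U ∈ unitaryGroup n ℂ) : traceNorm (c • U) = ‖c‖ * Fintype.card n := by
  simp [traceNorm, matAbs_smul_of_mem_unitaryGroup c hU, mul_comm]

end TraceNorm

lemma Matrix.permMatrix_mem_unitaryGroup {n R : Type*} [Fintype n] [DecidableEq n]
    [CommRing R] [StarRing R] (σ : Equiv.Perm n) : σ.permMatrix R ∈ unitaryGroup n R := by
  rw [mem_unitaryGroup_iff', star_eq_conjTranspose, conjTranspose_permMatrix, ← permMatrix_mul,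
    mul_inv_cancel, permMatrix_one]

noncomputable def bellVector (d : ℕ) : Fin d × Fin d → ℂ :=
  fun p => if p.1 = p.2 then ((Real.sqrt d : ℂ))⁻¹ else 0

lemma inv_sqrt_mul_inv_sqrt (d : ℕ) :
    ((Real.sqrt d : ℂ))⁻¹ * ((Real.sqrt d : ℂ))⁻¹ = (d : ℂ)⁻¹ := by
  rw [← mul_inv, ← Complex.ofReal_mul, Real.mul_self_sqrt d.cast_nonneg, Complex.ofReal_natCast]

lemma bellVector_dotProduct_star {d : ℕ} (hd : d ≠ 0) :
    bellVector d ⬝ᵥ star (bellVector d) = 1 := by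
  simp [dotProduct, bellVector, Fintype.sum_prod_type, apply_ite (starRingEnd ℂ), ite_mul,
    inv_sqrt_mul_inv_sqrt, hd]

lemma ptransB_vecMulVec_bellVector (d : ℕ) :
    ptransB (vecMulVec (bellVector d) (star (bellVector d))) =
      (d : ℂ)⁻¹ • Equiv.Perm.permMatrix ℂ (Equiv.prodComm (Fin d) (Fin d)) := by
  ext ⟨a, b⟩ ⟨a', b'⟩
  simp only [ptransB, of_apply, vecMulVec_apply, Pi.star_apply, bellVector, Matrix.smul_apply,
    PEquiv.toMatrix_apply, Equiv.toPEquiv_apply, Option.mem_def, Option.some.injEq]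
  split_ifs <;> simp_all [inv_sqrt_mul_inv_sqrt]

/-- **The maximally entangled state saturates the partial-transpose trace-norm bound.**
For the generalized Bell state `ψ (j,k) = (1/√d)·δ_{jk}` on `Fin d × Fin d` with density
matrix `ρ = ψ·ψᴴ`, one has `‖ρ^{T_B}‖₁ = d` while `‖ρ‖₁ = 1`. -/
theorem bell_state_traceNorm_ptransB (d : ℕ) (hd : 1 ≤ d)
    (ψ : Fin d × Fin d → ℂ)
    (hψ : ∀ p : Fin d × Fin d,
      ψ p = if p.1 = p.2 then ((Real.sqrt d : ℂ))⁻¹ else 0)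
    (ρ : Matrix (Fin d × Fin d) (Fin d × Fin d) ℂ)
    (hρ : ∀ p q, ρ p q = ψ p * (starRingEnd ℂ) (ψ q)) :
    traceNorm (ptransB ρ) = d ∧ traceNorm ρ = 1 := by
  obtain rfl : ψ = bellVector d := funext hψ
  obtain rfl : ρ = vecMulVec (bellVector d) (star (bellVector d)) := ext hρ
  have hd₀ : d ≠ 0 := by omega
  constructor
  · rw [ptransB_vecMulVec_bellVector,
      traceNorm_smul_of_mem_unitaryGroup _ (permMatrix_mem_unitaryGroup _),
      norm_inv, RCLike.norm_natCast, Fintype.card_prod, Fintype.card_fin, Nat.cast_mul,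
      inv_mul_cancel_left₀ (Nat.cast_ne_zero.mpr hd₀)]
  · rw [traceNorm_vecMulVec_self_star, bellVector_dotProduct_star hd₀, Complex.one_re]
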